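/- arXiv:2406.14244 — 7 statements merged into one kernel-verified Lean document; each statement's English description precedes it below -/
import Mathlib

section
/- If C is a circuit of a simple matroid M with cl(C) = C, then C belongs to every tropical basis of M. -/
open Set

namespace TropicalPaper

variable {α : Type*}

/-- A circuit of a matroid is a minimal dependent set. -/
def Circuit (M : Matroid α) (C : Set α) : Prop := Minimal M.Dep C

/-- A matroid is simple if every circuit has at least 3 elements
(equivalently: no loops and no parallel pairs). -/
def Simple (M : Matroid α) : Prop := ∀ C, Circuit M C → 3 ≤ C.ncard

/-- A set `𝒞'` of circuits of `M` is a tropical basis if for every non-closed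
set `X` there is `C ∈ 𝒞'` with `|C \ X| = 1`. -/
def TropicalBasis (M : Matroid α) (𝒞' : Set (Set α)) : Prop :=
  (∀ C ∈ 𝒞', Circuit M C) ∧
  ∀ X ⊆ M.E, M.closure X ≠ X → ∃ C ∈ 𝒞', (C \ X).ncard = 1

/-- A tropical basis is minimal if no circuit can be removed from it. -/
def MinimalTropicalBasis (M : Matroid α) (𝒞' : Set (Set α)) : Prop :=
  TropicalBasis M 𝒞' ∧ ∀ C ∈ 𝒞', ¬ TropicalBasis M (𝒞' \ {C})

/-- `A` is orthogonal to a family `𝒟` if `|A ∩ D| ≠ 1` for all `D ∈ 𝒟`. -/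
def Orthogonal (A : Set α) (𝒟 : Set (Set α)) : Prop :=
  ∀ D ∈ 𝒟, (A ∩ D).ncard ≠ 1

/-- The rank of a set: the maximal cardinality of an independent subset. -/
noncomputable def rk (M : Matroid α) (X : Set α) : ℕ :=
  sSup {n | ∃ I, I ⊆ X ∧ M.Indep I ∧ I.ncard = n}

/-- `D` is a double circuit if `rank D = |D| - 2 = rank (D \ {e})` for all `e ∈ D`. -/
def DoubleCircuit (M : Matroid α) (D : Set α) : Prop :=
  D ⊆ M.E ∧ D.Finite ∧
    ∀ e ∈ D, rk M D = D.ncard - 2 ∧ rk M (D \ {e}) = D.ncard - 2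

/-- `P` is the canonical partition of the double circuit `D`: a partition of `D`
into nonempty parts whose complements within `D` are exactly the circuits contained
in `D`. The degree of the double circuit is the number of parts of `P`. -/
def DCPartition (M : Matroid α) (D : Set α) (P : Set (Set α)) : Prop :=
  (∀ p ∈ P, p.Nonempty) ∧ (∀ p ∈ P, p ⊆ D) ∧ P.PairwiseDisjoint id ∧
    ⋃₀ P = D ∧ ∀ C, (Circuit M C ∧ C ⊆ D) ↔ ∃ p ∈ P, C = D \ p

/-- A matroid is binary iff the symmetric difference of any two distinct circuits
contains a circuit. -/
def Binary (M : Matroid α) : Prop :=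
  ∀ C₁ C₂, Circuit M C₁ → Circuit M C₂ → C₁ ≠ C₂ →
    ∃ C, C ⊆ (C₁ \ C₂) ∪ (C₂ \ C₁) ∧ Circuit M C

theorem stmt2 (M : Matroid α) [M.Finite] (hM : Simple M)
    (C : Set α) (hC : Circuit M C) (hcl : M.closure C = C)
    (𝒞' : Set (Set α)) (h𝒞' : TropicalBasis M 𝒞') : C ∈ 𝒞' := by
  obtain ⟨hCdep, hmin⟩ := hC
  -- C is nonempty
  obtain ⟨e, he⟩ : C.Nonempty := by
    rcases C.eq_empty_or_nonempty with h | h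
    · exact absurd (h ▸ M.empty_indep) hCdep.not_indep
    · exact h
  set X := C \ {e} with hX
  have hXC : X ⊆ C := diff_subset
  have hXindep : M.Indep X := by
    by_contra h
    have : M.Dep X := ⟨h, hXC.trans hCdep.subset_ground⟩
    exact (notMem_of_mem_diff (hmin this hXC he)) rfl
  have hins : insert e X = C := by
    rw [hX, insert_diff_singleton, insert_eq_self.2 he]
  have heX : e ∈ M.closure X := by
    rw [hXindep.mem_closure_iff, hins]
    exact Or.inl hCdep
  have hclX : M.closure X = C := by
    apply subset_antisymm
    · rw [← hcl]; exact M.closure_subset_closure hXC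
    · rw [← hins]
      exact insert_subset heX ((M.subset_closure X (hXC.trans hCdep.subset_ground)))
  have hne : M.closure X ≠ X := by
    intro h
    rw [h] at heX
    exact (notMem_of_mem_diff heX) rfl
  obtain ⟨C', hC'mem, hcard⟩ := h𝒞'.2 X (hXC.trans hCdep.subset_ground) hne
  obtain ⟨hC'dep, hC'min⟩ := h𝒞'.1 C' hC'mem
  obtain ⟨f, hf⟩ := Set.ncard_eq_one.mp hcard
  have hfC'2 : f ∈ C' := by
    have : f ∈ C' \ X := hf ▸ rfl
    exact this.1
  have hsub : C' \ {f} ⊆ X := by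
    intro x hx
    by_contra hxX
    have : x ∈ C' \ X := ⟨hx.1, hxX⟩
    rw [hf] at this
    exact hx.2 this
  have hC'find : M.Indep (C' \ {f}) := by
    by_contra h
    have hd : M.Dep (C' \ {f}) := ⟨h, diff_subset.trans hC'dep.subset_ground⟩
    exact (notMem_of_mem_diff (hC'min hd diff_subset hfC'2)) rfl
  have hfcl : f ∈ M.closure (C' \ {f}) := by
    rw [hC'find.mem_closure_iff]
    left
    rwa [insert_diff_singleton, insert_eq_self.2 hfC'2]
  have hfC : f ∈ C := by
    rw [← hclX]
    exact M.closure_subset_closure hsub hfcl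
  have hfe : f = e := by
    by_contra h
    have : f ∈ X := ⟨hfC, h⟩
    have : f ∈ C' \ X := hf ▸ rfl
    exact this.2 ‹f ∈ X›
  have hC'C : C' ⊆ C := by
    intro x hx
    by_cases hxf : x = f
    · rwa [hxf, hfe]
    · exact hXC (hsub ⟨hx, hxf⟩)
  have : C = C' := subset_antisymm (hmin hC'dep hC'C) hC'C
  rwa [this]
end TropicalPaper
end

section
/- Every double circuit D of a simple matroid M admits a unique partition D = D₁ ∪ ... ∪ D_k into nonempty parts such that the circuits of M contained in D are exactly the sets D \ D_i for 1 ≤ i ≤ k. -/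
open Set

namespace TropicalPaper

variable {α : Type*}

variable {M : Matroid α} {X Y I J C C₁ C₂ : Set α}

lemma rk_eq_ncard_of_basis [M.Finite] (hI : M.IsBasis I X) : rk M X = I.ncard := by
  apply IsGreatest.csSup_eq
  refine ⟨⟨I, hI.subset, hI.indep, rfl⟩, ?_⟩
  rintro n ⟨J, hJX, hJ, rfl⟩
  obtain ⟨J', hJ', hJJ'⟩ := hJ.subset_isBasis_of_subset hJX hI.subset_ground
  have h1 : I.encard = J'.encard := hI.encard_eq_encard hJ'
  have h2 : J.ncard ≤ J'.ncard :=
    Set.ncard_le_ncard hJJ' (M.set_finite J' hJ'.indep.subset_ground)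
  have h3 : I.ncard = J'.ncard := by rw [Set.ncard, Set.ncard, h1]
  omega

lemma rk_indep [M.Finite] (h : M.Indep I) : rk M I = I.ncard :=
  rk_eq_ncard_of_basis h.isBasis_self

lemma ncard_le_rk [M.Finite] (h : M.Indep I) (hIX : I ⊆ X) (hX : X ⊆ M.E) :
    I.ncard ≤ rk M X := by
  obtain ⟨J, hJ, hIJ⟩ := h.subset_isBasis_of_subset hIX hX
  rw [rk_eq_ncard_of_basis hJ]
  exact Set.ncard_le_ncard hIJ (M.set_finite J hJ.indep.subset_ground)

lemma rk_lt_ncard_of_dep [M.Finite] (h : M.Dep X) : rk M X < X.ncard := by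
  obtain ⟨I, hI⟩ := M.exists_isBasis X h.subset_ground
  rw [rk_eq_ncard_of_basis hI]
  refine Set.ncard_lt_ncard (ssubset_of_subset_of_ne hI.subset ?_)
    (M.set_finite X h.subset_ground)
  rintro rfl
  exact h.not_indep hI.indep

lemma rk_le_add [M.Finite] (hYX : Y ⊆ X) (hX : X ⊆ M.E) :
    rk M X ≤ rk M Y + (X \ Y).ncard := by
  obtain ⟨J, hJ⟩ := M.exists_isBasis X hX
  rw [rk_eq_ncard_of_basis hJ]
  have hJfin := M.set_finite J hJ.indep.subset_ground
  have h1 : (J ∩ Y).ncard + (J \ Y).ncard = J.ncard :=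
    Set.ncard_inter_add_ncard_diff_eq_ncard J Y hJfin
  have h2 : (J ∩ Y).ncard ≤ rk M Y :=
    ncard_le_rk (hJ.indep.subset inter_subset_left) inter_subset_right (hYX.trans hX)
  have h3 : (J \ Y).ncard ≤ (X \ Y).ncard :=
    Set.ncard_le_ncard (diff_subset_diff_left hJ.subset) (M.set_finite X hX).diff
  omega

lemma rk_submod [M.Finite] (hX : X ⊆ M.E) (hY : Y ⊆ M.E) :
    rk M (X ∪ Y) + rk M (X ∩ Y) ≤ rk M X + rk M Y := by
  have hU : X ∪ Y ⊆ M.E := union_subset hX hY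
  obtain ⟨I, hI⟩ := M.exists_isBasis (X ∩ Y) (inter_subset_left.trans hX)
  obtain ⟨J, hJ, hJI⟩ := hI.exists_isBasis_inter_eq_of_superset
    (inter_subset_left.trans subset_union_left) hU
  have hJfin := M.set_finite J hJ.indep.subset_ground
  have hkey : (J ∩ X) ∪ (J ∩ Y) = J := by
    rw [← inter_union_distrib_left]
    exact inter_eq_left.mpr hJ.subset
  have hkey2 : (J ∩ X) ∩ (J ∩ Y) = I := by
    rw [← hJI]; ext x; simp only [mem_inter_iff]; tauto
  have hie : ((J ∩ X) ∪ (J ∩ Y)).ncard + ((J ∩ X) ∩ (J ∩ Y)).ncard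
      = (J ∩ X).ncard + (J ∩ Y).ncard :=
    Set.ncard_union_add_ncard_inter _ _ (hJfin.subset inter_subset_left)
      (hJfin.subset inter_subset_left)
  rw [hkey, hkey2] at hie
  have h1 : (J ∩ X).ncard ≤ rk M X :=
    ncard_le_rk (hJ.indep.subset inter_subset_left) inter_subset_right hX
  have h2 : (J ∩ Y).ncard ≤ rk M Y :=
    ncard_le_rk (hJ.indep.subset inter_subset_left) inter_subset_right hY
  rw [rk_eq_ncard_of_basis hJ, rk_eq_ncard_of_basis hI]
  omega

lemma indep_of_ssubset_circuit (h : Circuit M C) (hX : X ⊂ C) : M.Indep X := by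
  by_contra hdep
  have hXE : X ⊆ M.E := hX.subset.trans h.1.subset_ground
  exact hX.ne (subset_antisymm hX.subset (h.2 ⟨hdep, hXE⟩ hX.subset))

lemma rk_circuit [M.Finite] (h : Circuit M C) : rk M C + 1 = C.ncard := by
  have hCE := h.1.subset_ground
  have hCfin := M.set_finite C hCE
  obtain ⟨g, hg⟩ := h.1.nonempty
  have hi : M.Indep (C \ {g}) :=
    indep_of_ssubset_circuit h (sdiff_singleton_ssubset.mpr hg)
  have h1 : (C \ {g}).ncard ≤ rk M C := ncard_le_rk hi diff_subset hCE
  have h2 : rk M C < C.ncard := rk_lt_ncard_of_dep h.1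
  have h3 : (C \ {g}).ncard + 1 = C.ncard := Set.ncard_diff_singleton_add_one hg hCfin
  omega

lemma exists_circuit_subset (hfin : X.Finite) (hX : M.Dep X) :
    ∃ C, Circuit M C ∧ C ⊆ X := by
  have hs : {Y | Y ⊆ X ∧ M.Dep Y}.Finite :=
    hfin.finite_subsets.subset (fun Y hY => hY.1)
  obtain ⟨C, ⟨hCX, hCdep⟩, hmin⟩ := hs.exists_minimalFor id _ (by exact ⟨X, rfl.subset, hX⟩)
  refine ⟨C, ⟨hCdep, fun Z hZ hZC => ?_⟩, hCX⟩
  have := hmin ⟨hZC.trans hCX, hZ⟩ hZC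
  exact this

lemma circuit_unique [M.Finite] (hX : X ⊆ M.E) (hnull : X.ncard ≤ rk M X + 1)
    (h1 : Circuit M C₁) (h1X : C₁ ⊆ X) (h2 : Circuit M C₂) (h2X : C₂ ⊆ X) : C₁ = C₂ := by
  by_contra hne
  have hXfin := M.set_finite X hX
  have hC1E := h1.1.subset_ground
  have hC2E := h2.1.subset_ground
  have hr1 := rk_circuit h1
  have hr2 := rk_circuit h2
  have hiI : M.Indep (C₁ ∩ C₂) := by
    refine indep_of_ssubset_circuit h1 (ssubset_of_subset_of_ne inter_subset_left ?_)
    intro heq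
    have hsub : C₁ ⊆ C₂ := by rw [← heq]; exact inter_subset_right
    exact hne (subset_antisymm hsub (h2.2 h1.1 hsub))
  have hrI : rk M (C₁ ∩ C₂) = (C₁ ∩ C₂).ncard := rk_indep hiI
  have hsub := rk_submod hC1E hC2E
  have hie : (C₁ ∪ C₂).ncard + (C₁ ∩ C₂).ncard = C₁.ncard + C₂.ncard :=
    Set.ncard_union_add_ncard_inter _ _ (hXfin.subset h1X) (hXfin.subset h2X)
  have hUX : C₁ ∪ C₂ ⊆ X := union_subset h1X h2X
  have hXsplit : (C₁ ∪ C₂).ncard + (X \ (C₁ ∪ C₂)).ncard = X.ncard := by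
    have h := Set.ncard_inter_add_ncard_diff_eq_ncard X (C₁ ∪ C₂) hXfin
    rwa [inter_eq_right.mpr hUX] at h
  have hrk_le : rk M X ≤ rk M (C₁ ∪ C₂) + (X \ (C₁ ∪ C₂)).ncard :=
    rk_le_add hUX hX
  omega


theorem stmt4 (M : Matroid α) [M.Finite] (hM : Simple M)
    (D : Set α) (hD : DoubleCircuit M D) :
    ∃! P : Set (Set α), DCPartition M D P := by
  obtain ⟨hDE, hDfin, hcond⟩ := hD
  have hbig : ∀ e ∈ D, 3 ≤ D.ncard ∧ rk M D + 2 = D.ncard := by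
    intro e he
    have hpos : 0 < D.ncard := (Set.ncard_pos hDfin).mpr ⟨e, he⟩
    have hr := (hcond e he).1
    have hdep : M.Dep D := by
      rcases M.indep_or_dep hDE with hi | hd
      · have := rk_indep hi; omega
      · exact hd
    obtain ⟨C, hC, hCD⟩ := exists_circuit_subset hDfin hdep
    have h3 : 3 ≤ C.ncard := hM C hC
    have h4 : C.ncard ≤ D.ncard := Set.ncard_le_ncard hCD hDfin
    exact ⟨by omega, by omega⟩
  have hdel : ∀ e ∈ D, rk M (D \ {e}) + 1 = (D \ {e}).ncard := by
    intro e he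
    have h1 := (hcond e he).2
    have h2 := (hbig e he).1
    have h3 : (D \ {e}).ncard + 1 = D.ncard := Set.ncard_diff_singleton_add_one he hDfin
    omega
  have hkeyuniq : ∀ x ∈ D, ∀ C₁ C₂, Circuit M C₁ → C₁ ⊆ D \ {x} → Circuit M C₂ →
      C₂ ⊆ D \ {x} → C₁ = C₂ := by
    intro x hx C₁ C₂ h1 h1s h2 h2s
    have hsubE : D \ {x} ⊆ M.E := diff_subset.trans hDE
    have hn := hdel x hx
    exact circuit_unique hsubE (by omega) h1 h1s h2 h2s
  have hDCP : DCPartition M D ((fun C => D \ C) '' {C | Circuit M C ∧ C ⊆ D}) := by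
    refine ⟨?_, ?_, ?_, ?_, ?_⟩
    · rintro p ⟨C, ⟨hC, hCD⟩, rfl⟩
      obtain ⟨g, hg⟩ := hC.1.nonempty
      have hbigD := hbig g (hCD hg)
      have hrC := rk_circuit hC
      by_contra hempty
      rw [Set.not_nonempty_iff_eq_empty, Set.diff_eq_empty] at hempty
      have hCD' : C = D := subset_antisymm hCD hempty
      rw [hCD'] at hrC
      omega
    · rintro p ⟨C, ⟨hC, hCD⟩, rfl⟩; exact diff_subset
    · rintro p ⟨C₁, ⟨h1, h1D⟩, rfl⟩ q ⟨C₂, ⟨h2, h2D⟩, rfl⟩ hne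
      simp only [Function.onFun, id_eq]
      rw [Set.disjoint_left]
      rintro x ⟨hxD, hx1'⟩ ⟨-, hx2'⟩
      exact hne (by rw [hkeyuniq x hxD C₁ C₂ h1 (subset_diff_singleton h1D hx1') h2
        (subset_diff_singleton h2D hx2')])
    · apply subset_antisymm
      · exact sUnion_subset (by rintro p ⟨C, ⟨hC, hCD⟩, rfl⟩; exact diff_subset)
      · intro e he
        have hdep : M.Dep (D \ {e}) := by
          have h1 := hdel e he
          rcases M.indep_or_dep (X := D \ {e}) (diff_subset.trans hDE) with hi | hd
          · have := rk_indep hi; omega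
          · exact hd
        obtain ⟨C, hC, hCD⟩ := exists_circuit_subset hDfin.diff hdep
        exact ⟨D \ C, ⟨C, ⟨hC, hCD.trans diff_subset⟩, rfl⟩, ⟨he, fun hc => (hCD hc).2 rfl⟩⟩
    · intro C
      constructor
      · rintro ⟨hC, hCD⟩
        exact ⟨D \ C, ⟨C, ⟨hC, hCD⟩, rfl⟩, (Set.diff_diff_cancel_left hCD).symm⟩
      · rintro ⟨p, ⟨C', ⟨hC', hC'D⟩, rfl⟩, rfl⟩
        rw [Set.diff_diff_cancel_left hC'D]
        exact ⟨hC', hC'D⟩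
  refine ⟨_, hDCP, ?_⟩
  intro Q hQ
  obtain ⟨-, hQsub, -, -, hQiff⟩ := hQ
  obtain ⟨-, hPsub, -, -, hPiff⟩ := hDCP
  ext q
  constructor
  · intro hq
    have hcq : Circuit M (D \ q) ∧ D \ q ⊆ D := (hQiff (D \ q)).mpr ⟨q, hq, rfl⟩
    obtain ⟨p, hp, heq⟩ := (hPiff (D \ q)).mp hcq
    have hqp : q = p := by
      have h1 : D \ (D \ q) = q := Set.diff_diff_cancel_left (hQsub q hq)
      have h2 : D \ (D \ p) = p := Set.diff_diff_cancel_left (hPsub p hp)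
      rw [← h1, heq, h2]
    rwa [hqp]
  · intro hq
    have hcp : Circuit M (D \ q) ∧ D \ q ⊆ D := (hPiff (D \ q)).mpr ⟨q, hq, rfl⟩
    obtain ⟨q', hq', heq⟩ := (hQiff (D \ q)).mp hcp
    have hpq : q = q' := by
      have h1 : D \ (D \ q) = q := Set.diff_diff_cancel_left (hPsub q hq)
      have h2 : D \ (D \ q') = q' := Set.diff_diff_cancel_left (hQsub q' hq')
      rw [← h1, heq, h2]
    rwa [hpq]

end TropicalPaper
end

section
/- Let M be a simple matroid such that for every circuit C either cl(C) = C or there exists f ∈ cl(C) \ C such that C ∪ {f} is a double circuit of degree 3. Then {C ∈ 𝒞 : cl(C) = C} is a tropical basis of M. -/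
open Set

namespace TropicalPaper

variable {α : Type*}

lemma exists_circuit_subset_s6 (M : Matroid α) [M.Finite] {D : Set α} (hD : M.Dep D) :
    ∃ C ⊆ D, Circuit M C := by
  have hfin : {A : Set α | M.Dep A ∧ A ⊆ D}.Finite :=
    ((M.set_finite D hD.subset_ground).finite_subsets).subset (fun A hA => hA.2)
  obtain ⟨C, hC, hmin⟩ := hfin.exists_minimal ⟨D, hD, subset_rfl⟩
  exact ⟨C, hC.2, hC.1, fun B hB hBC => hmin ⟨hB, hBC.trans hC.2⟩ hBC⟩

lemma exists_circuit_diff (M : Matroid α) [M.Finite] {X : Set α} (hX : X ⊆ M.E)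
    (hne : M.closure X ≠ X) : ∃ C f, Circuit M C ∧ f ∈ C ∧ C \ X = {f} := by
  have hsub : X ⊆ M.closure X := M.subset_closure X hX
  obtain ⟨f, hfcl, hfX⟩ : ∃ f, f ∈ M.closure X ∧ f ∉ X := by
    by_contra h'; push_neg at h'
    exact hne (Set.Subset.antisymm (fun y hy => h' y hy) hsub)
  obtain ⟨I, hI⟩ := M.exists_isBasis X hX
  have hfclI : f ∈ M.closure I := by rwa [hI.closure_eq_closure]
  have hdep : M.Dep (insert f I) :=
    hI.indep.insert_dep_iff.mpr ⟨hfclI, fun hfI => hfX (hI.subset hfI)⟩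
  obtain ⟨C, hCsub, hC⟩ := exists_circuit_subset_s6 M hdep
  have hfC : f ∈ C := by
    by_contra hfC
    have hCI : C ⊆ I := fun x hx => ((hCsub hx).resolve_left (by rintro rfl; exact hfC hx))
    exact (hI.indep.subset hCI).not_dep hC.1
  refine ⟨C, f, hC, hfC, ?_⟩
  refine Set.eq_singleton_iff_unique_mem.mpr ⟨⟨hfC, hfX⟩, ?_⟩
  rintro x ⟨hxC, hxX⟩
  rcases hCsub hxC with rfl | hxI
  · rfl
  · exact absurd (hI.subset hxI) hxX


lemma key {M : Matroid α} [M.Finite] (hM : Simple M) {X C : Set α} {f f' : α}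
    (hC : Circuit M C) (hCX : C \ X = {f})
    (hmin : ∀ C', Circuit M C' → (C' \ X).ncard = 1 → C.ncard ≤ C'.ncard)
    (hf'cl : f' ∈ M.closure C) (hf'C : f' ∉ C)
    {D₁ D₂ : Set α}
    (hA : Circuit M ((C ∪ {f'}) \ D₁)) (hB : Circuit M ((C ∪ {f'}) \ D₂))
    (hD2ne : D₂.Nonempty)
    (hdisj12 : Disjoint D₁ D₂) (hdisj1f : Disjoint D₁ {f'}) (hdisj2f : Disjoint D₂ {f'})
    (hU : D₁ ∪ D₂ ∪ {f'} = C ∪ {f'})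
    (hfD₁ : f ∈ D₁) : False := by
  set D := C ∪ {f'} with hD
  have hDE : D ⊆ M.E := union_subset hC.prop.subset_ground
    (singleton_subset_iff.2 (M.closure_subset_ground C hf'cl))
  have hDfin : D.Finite := M.set_finite D hDE
  have hCfin : C.Finite := hDfin.subset subset_union_left
  have hD1D : D₁ ⊆ D := hU ▸ (subset_union_left.trans subset_union_left)
  have hD2D : D₂ ⊆ D := hU ▸ (subset_union_right.trans subset_union_left)
  have hfCX : f ∈ C \ X := hCX ▸ rfl
  have hfC : f ∈ C := hfCX.1
  have hfX : f ∉ X := hfCX.2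
  have hff' : f ≠ f' := fun h => hf'C (h ▸ hfC)
  have hcardD : D.ncard = C.ncard + 1 := by
    rw [hD, union_singleton, Set.ncard_insert_of_notMem hf'C hCfin]
  have hC3 := hM C hC
  have hf'D1 : f' ∉ D₁ := fun h => disjoint_left.mp hdisj1f h rfl
  have hf'D2 : f' ∉ D₂ := fun h => disjoint_left.mp hdisj2f h rfl
  have hfD2 : f ∉ D₂ := disjoint_left.mp hdisj12 hfD₁
  have hle : ∀ Q, Q ⊆ D → Circuit M (D \ Q) → ((D \ Q) \ X).ncard = 1 → Q.ncard ≤ 1 := by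
    intro Q hQD hcirc hcard
    have h1 := hmin _ hcirc hcard
    have h2 : (D \ Q).ncard = D.ncard - Q.ncard :=
      Set.ncard_diff hQD (hDfin.subset hQD)
    omega
  by_cases hf'X : f' ∈ X
  · -- use B = D \ D₂
    have hBX : (D \ D₂) \ X = {f} := by
      ext x
      constructor
      · rintro ⟨⟨hxD, hxD₂⟩, hxX⟩
        have hxC : x ∈ C := by
          rcases hxD with h | h
          · exact h
          · exact absurd (h ▸ hf'X) hxX
        have hx : x ∈ C \ X := ⟨hxC, hxX⟩
        rw [hCX] at hx; exact hx
      · rintro rfl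
        exact ⟨⟨Or.inl hfC, hfD2⟩, hfX⟩
    have h2 : D₂.ncard ≤ 1 := hle D₂ hD2D hB (by rw [hBX]; simp)
    have h2' : D₂.ncard = 1 :=
      le_antisymm h2 ((Set.ncard_pos (hDfin.subset hD2D)).mpr hD2ne)
    obtain ⟨g, hg⟩ := Set.ncard_eq_one.mp h2'
    have hAeq : D \ D₁ = {g, f'} := by
      ext x
      simp only [mem_diff, mem_insert_iff, mem_singleton_iff]
      constructor
      · rintro ⟨hxD, hx1⟩
        rw [← hU] at hxD
        rcases hxD with (h | h) | h
        · exact absurd h hx1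
        · exact Or.inl (by rw [hg] at h; exact h)
        · exact Or.inr h
      · rintro (rfl | rfl)
        · exact ⟨hD2D (hg ▸ rfl), fun h => disjoint_left.mp hdisj12 h (hg ▸ rfl)⟩
        · exact ⟨Or.inr rfl, hf'D1⟩
    have h3 := hM _ hA
    rw [show (C ∪ {f'}) \ D₁ = {g, f'} from hAeq] at h3
    have h4 : ({g, f'} : Set α).ncard ≤ 2 :=
      (Set.ncard_insert_le g {f'}).trans (by simp)
    omega
  · -- f' ∉ X, use A = D \ D₁
    have hAX : (D \ D₁) \ X = {f'} := by
      ext x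
      constructor
      · rintro ⟨⟨hxD, hxD₁⟩, hxX⟩
        rcases hxD with h | h
        · have hx : x ∈ C \ X := ⟨h, hxX⟩
          rw [hCX] at hx
          exact absurd (hx ▸ hfD₁) hxD₁
        · exact h
      · rintro rfl
        exact ⟨⟨Or.inr rfl, hf'D1⟩, hf'X⟩
    have h1 : D₁.ncard ≤ 1 := hle D₁ hD1D hA (by rw [hAX]; simp)
    have h1' : D₁.ncard = 1 :=
      le_antisymm h1 ((Set.ncard_pos (hDfin.subset hD1D)).mpr ⟨f, hfD₁⟩)
    obtain ⟨g, hg⟩ := Set.ncard_eq_one.mp h1'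
    have hgf : g = f := by
      have := hg ▸ hfD₁; exact (mem_singleton_iff.mp this).symm
    subst hgf
    have hBeq : D \ D₂ = {g, f'} := by
      ext x
      simp only [mem_diff, mem_insert_iff, mem_singleton_iff]
      constructor
      · rintro ⟨hxD, hx2⟩
        rw [← hU] at hxD
        rcases hxD with (h | h) | h
        · exact Or.inl (by rw [hg] at h; exact h)
        · exact absurd h hx2
        · exact Or.inr h
      · rintro (rfl | rfl)
        · exact ⟨Or.inl hfC, hfD2⟩
        · exact ⟨Or.inr rfl, hf'D2⟩
    have h3 := hM _ hB
    rw [show (C ∪ {f'}) \ D₂ = {g, f'} from hBeq] at h3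
    have h4 : ({g, f'} : Set α).ncard ≤ 2 :=
      (Set.ncard_insert_le g {f'}).trans (by simp)
    omega

theorem stmt6 (M : Matroid α) [M.Finite] (hM : Simple M)
    (h : ∀ C, Circuit M C → M.closure C = C ∨
      ∃ f ∈ M.closure C \ C, DoubleCircuit M (C ∪ {f}) ∧
        ∃ P, DCPartition M (C ∪ {f}) P ∧ P.ncard = 3) :
    TropicalBasis M {C | Circuit M C ∧ M.closure C = C} := by
  constructor
  · exact fun C hC => hC.1
  intro X hX hne
  obtain ⟨C₀, f₀, hC₀, hf₀C₀, hC₀X⟩ := exists_circuit_diff M hX hne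
  have hSne : {n | ∃ C, (Circuit M C ∧ (C \ X).ncard = 1) ∧ C.ncard = n}.Nonempty :=
    ⟨C₀.ncard, C₀, ⟨hC₀, by rw [hC₀X]; simp⟩, rfl⟩
  obtain ⟨C, ⟨hCcirc, hCX1⟩, hCn⟩ := Nat.sInf_mem hSne
  have hmin : ∀ C', Circuit M C' → (C' \ X).ncard = 1 → C.ncard ≤ C'.ncard :=
    fun C' h1 h2 => hCn ▸ Nat.sInf_le ⟨C', ⟨h1, h2⟩, rfl⟩
  by_cases hclC : M.closure C = C
  · exact ⟨C, ⟨hCcirc, hclC⟩, hCX1⟩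
  exfalso
  obtain ⟨f, hCX⟩ := Set.ncard_eq_one.mp hCX1
  obtain ⟨f', hf'mem, -, P, hP, hP3⟩ := (h C hCcirc).resolve_left hclC
  obtain ⟨hf'cl, hf'C⟩ := hf'mem
  obtain ⟨hPne, hPsub, hPdisj, hPunion, hPcirc⟩ := hP
  set D := C ∪ {f'} with hDdef
  -- {f'} ∈ P
  have hDC : D \ C = {f'} := by
    ext x
    simp only [hDdef, mem_diff, mem_union, mem_singleton_iff]
    constructor
    · rintro ⟨h1 | rfl, h2⟩
      · exact absurd h1 h2
      · rfl
    · rintro rfl; exact ⟨Or.inr rfl, hf'C⟩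
  obtain ⟨p, hpP, hCp⟩ := (hPcirc C).mp ⟨hCcirc, subset_union_left⟩
  have hpf : p = {f'} := by
    rw [← hDC, hCp, diff_diff_cancel_left (hPsub p hpP)]
  rw [hpf] at hpP
  obtain ⟨a, b, c, hab, hac, hbc, hPeq⟩ := Set.ncard_eq_three.mp hP3
  have hf'abc : ({f'} : Set α) = a ∨ ({f'} : Set α) = b ∨ ({f'} : Set α) = c := by
    have := hPeq ▸ hpP
    simpa using this
  obtain ⟨D₁, D₂, hPD, h12, h1f, h2f⟩ :
      ∃ D₁ D₂, P = {D₁, D₂, {f'}} ∧ D₁ ≠ D₂ ∧ D₁ ≠ {f'} ∧ D₂ ≠ {f'} := by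
    rcases hf'abc with rfl | rfl | rfl
    · exact ⟨b, c, by rw [hPeq]; ext x; simp; tauto, hbc, hab.symm, hac.symm⟩
    · exact ⟨a, c, by rw [hPeq]; ext x; simp; tauto, hac, hab, hbc.symm⟩
    · exact ⟨a, b, hPeq, hab, hac, hbc⟩
  have h1P : D₁ ∈ P := by rw [hPD]; simp
  have h2P : D₂ ∈ P := by rw [hPD]; simp
  have hfP : ({f'} : Set α) ∈ P := hpP
  have hU : D₁ ∪ D₂ ∪ {f'} = D := by
    rw [← hPunion, hPD]
    simp only [sUnion_insert, sUnion_singleton]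
    rw [union_assoc]
  have hA : Circuit M (D \ D₁) := ((hPcirc (D \ D₁)).mpr ⟨D₁, h1P, rfl⟩).1
  have hB : Circuit M (D \ D₂) := ((hPcirc (D \ D₂)).mpr ⟨D₂, h2P, rfl⟩).1
  have hd12 : Disjoint D₁ D₂ := hPdisj h1P h2P h12
  have hd1f : Disjoint D₁ {f'} := hPdisj h1P hfP h1f
  have hd2f : Disjoint D₂ {f'} := hPdisj h2P hfP h2f
  have hfC : f ∈ C := by
    have : f ∈ C \ X := hCX ▸ rfl
    exact this.1
  have hff' : f ≠ f' := fun hh => hf'C (hh ▸ hfC)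
  have hfD : f ∈ D₁ ∨ f ∈ D₂ := by
    have hfD' : f ∈ D := Or.inl hfC
    rw [← hU] at hfD'
    rcases hfD' with (h' | h') | h'
    · exact Or.inl h'
    · exact Or.inr h'
    · exact absurd h' hff'
  rcases hfD with hf1 | hf2
  · exact key hM hCcirc hCX hmin hf'cl hf'C hA hB (hPne D₂ h2P) hd12 hd1f hd2f hU hf1
  · exact key hM hCcirc hCX hmin hf'cl hf'C hB hA (hPne D₁ h1P) hd12.symm hd2f hd1f
      (by rw [← hU.trans hDdef]; ext x; simp; tauto) hf2
end TropicalPaper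
end

section
/- Let N be obtained from the uniform matroid U_{2,n} by replacing each element with two parallel elements, and let M be the dual of N. Then every circuit of M is closed, and hence M has a unique minimal tropical basis consisting of all circuits. -/
open Set

namespace TropicalPaper

variable {α : Type*}

lemma exists_minimal_subset' {P : Set α → Prop} :
    ∀ (k : ℕ) (s : Set α), s.Finite → s.ncard ≤ k → P s → ∃ t, t ⊆ s ∧ Minimal P t := by
  intro k
  induction k with
  | zero =>
    intro s hfin hcard hs
    refine ⟨s, Subset.rfl, hs, fun u hu hus => ?_⟩
    have : s = ∅ := by rw [← Set.ncard_eq_zero hfin]; omega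
    subst this
    exact empty_subset u
  | succ k ih =>
    intro s hfin hcard hs
    by_cases h : ∃ u, u ⊂ s ∧ P u
    · obtain ⟨u, hus, hu⟩ := h
      obtain ⟨t, htu, ht⟩ := ih u (hfin.subset hus.subset)
        (by have := Set.ncard_lt_ncard hus hfin; omega) hu
      exact ⟨t, htu.trans hus.subset, ht⟩
    · refine ⟨s, Subset.rfl, hs, fun u hu hus => ?_⟩
      by_contra h'
      exact h ⟨u, lt_of_le_of_ne hus (fun he => h' (he ▸ Subset.rfl)), hu⟩

lemma exists_minimal_subset {P : Set α → Prop} (s : Set α) (hfin : s.Finite) (hs : P s) :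
    ∃ t, t ⊆ s ∧ Minimal P t :=
  exists_minimal_subset' s.ncard s hfin le_rfl hs

theorem stmt11 (n : ℕ) (hn : 2 ≤ n) (N : Matroid (Fin n × Fin 2))
    (hE : N.E = Set.univ)
    (hcirc : ∀ C, Circuit N C ↔
      ((∃ i, C = {(i, 0), (i, 1)}) ∨ (C.ncard = 3 ∧ Set.InjOn Prod.fst C))) :
    (∀ C, Circuit N✶ C → (N✶).closure C = C) ∧
      ∀ B, MinimalTropicalBasis N✶ B ↔ B = {C | Circuit N✶ C} := by
  have hEdual : N✶.E = Set.univ := by rw [Matroid.dual_ground, hE]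
  set K : Fin n → Set (Fin n × Fin 2) :=
    fun i => ({(i, 0), (i, 1)} : Set (Fin n × Fin 2))ᶜ with hKdef
  have hpairmem : ∀ (i : Fin n) (x : Fin n × Fin 2),
      x ∈ ({(i, 0), (i, 1)} : Set (Fin n × Fin 2)) ↔ x.1 = i := by
    intro i x
    constructor
    · rintro (rfl | rfl) <;> rfl
    · intro h
      obtain ⟨x1, x2⟩ := x
      dsimp at h
      subst h
      fin_cases x2 <;> simp
  have hKmem : ∀ (i : Fin n) (x : Fin n × Fin 2), x ∈ K i ↔ x.1 ≠ i := by
    intro i x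
    simp only [hKdef, mem_compl_iff, hpairmem]
  have hpair_eq : ∀ x y : Fin n × Fin 2, x ≠ y → x.1 = y.1 →
      ({x, y} : Set (Fin n × Fin 2)) = {(x.1, 0), (x.1, 1)} := by
    intro x y hne hf
    obtain ⟨x1, x2⟩ := x
    obtain ⟨y1, y2⟩ := y
    dsimp at hf
    subst hf
    fin_cases x2 <;> fin_cases y2 <;> simp_all [Set.pair_comm]
  -- Characterization of independence in N
  have hNindep : ∀ I : Set (Fin n × Fin 2), N.Indep I ↔ I.ncard ≤ 2 ∧ InjOn Prod.fst I := by
    intro I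
    rw [Matroid.indep_iff_not_dep, hE, and_iff_left (subset_univ I)]
    constructor
    · intro hnd
      have hinj : InjOn Prod.fst I := by
        intro x hx y hy hxy
        by_contra hne
        refine hnd ?_
        have hpair : ({x, y} : Set (Fin n × Fin 2)) ⊆ I := by
          rintro z (rfl | rfl) <;> assumption
        have hc : Circuit N {x, y} := (hcirc _).2 (Or.inl ⟨x.1, hpair_eq x y hne hxy⟩)
        exact hc.prop.superset hpair (by rw [hE]; exact subset_univ _)
      refine ⟨?_, hinj⟩
      by_contra hlt
      push_neg at hlt
      obtain ⟨t, htI, ht3⟩ := Set.exists_subset_card_eq (s := I) (n := 3) hlt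
      have hc : Circuit N t := (hcirc _).2 (Or.inr ⟨ht3, hinj.mono htI⟩)
      exact hnd (hc.prop.superset htI (by rw [hE]; exact subset_univ _))
    · rintro ⟨hcard, hinj⟩ hdep
      obtain ⟨C, hCI, hC⟩ := exists_minimal_subset I (toFinite I) hdep
      rcases (hcirc C).1 hC with ⟨i, rfl⟩ | ⟨h3, _⟩
      · have h0 : ((i, 0) : Fin n × Fin 2) ∈ I := hCI (by left; rfl)
        have h1 : ((i, 1) : Fin n × Fin 2) ∈ I := hCI (by right; rfl)
        have := hinj h0 h1 rfl
        simp at this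
      · have := Set.ncard_le_ncard hCI (toFinite I)
        omega
  -- two-element transversals are bases of N
  have hBase : ∀ x y : Fin n × Fin 2, x.1 ≠ y.1 → N.IsBase {x, y} := by
    intro x y hxy
    have hne : x ≠ y := fun h => hxy (by rw [h])
    have hind : N.Indep {x, y} := by
      refine (hNindep _).2 ⟨le_of_eq (Set.ncard_pair hne), ?_⟩
      rintro a (rfl | rfl) b (rfl | rfl) hab
      · rfl
      · exact absurd hab hxy
      · exact absurd hab.symm hxy
      · rfl
    rw [Matroid.isBase_iff_maximal_indep]
    refine ⟨hind, fun J hJ hsub => ?_⟩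
    have hJ2 := ((hNindep J).1 hJ).1
    have := Set.eq_of_subset_of_ncard_le hsub (by rw [Set.ncard_pair hne]; exact hJ2)
      (toFinite J)
    exact this ▸ Subset.rfl
  -- every base of N contains two elements with distinct first coordinates
  have hBaseFst : ∀ B, N.IsBase B → ∃ x ∈ B, ∃ y ∈ B, x.1 ≠ y.1 := by
    intro B hB
    by_contra h
    push_neg at h
    obtain ⟨hBcard, hBinj⟩ := (hNindep B).1 hB.indep
    have hss : B.Subsingleton := fun a ha b hb => hBinj ha hb (h a ha b hb)
    have h01 : (⟨0, by omega⟩ : Fin n) ≠ ⟨1, by omega⟩ := by simp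
    obtain ⟨k, hk⟩ : ∃ k : Fin n, ∀ b ∈ B, b.1 ≠ k := by
      by_cases h0 : ∀ b ∈ B, b.1 ≠ (⟨0, by omega⟩ : Fin n)
      · exact ⟨_, h0⟩
      · push_neg at h0
        obtain ⟨b, hbB, hb0⟩ := h0
        refine ⟨⟨1, by omega⟩, fun b' hb' => ?_⟩
        rw [hss hb' hbB, hb0]
        exact h01
    have hkB : ((k, 0) : Fin n × Fin 2) ∉ B := fun hmem => hk _ hmem rfl
    have hind' : N.Indep (insert (k, 0) B) := by
      refine (hNindep _).2 ⟨?_, ?_⟩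
      · have h1 : B.ncard ≤ 1 := by
          rcases hss.eq_empty_or_singleton with rfl | ⟨a, rfl⟩ <;> simp
        have := Set.ncard_insert_le ((k, 0) : Fin n × Fin 2) B
        omega
      · rintro a (rfl | ha) b (rfl | hb) hab
        · rfl
        · exact absurd hab.symm (hk b hb)
        · exact absurd hab (hk a ha)
        · exact hBinj ha hb hab
    have heq := hB.eq_of_subset_indep hind' (subset_insert _ _)
    exact hkB (heq ▸ mem_insert _ _)
  -- dependence in the dual
  have hMdep : ∀ D : Set (Fin n × Fin 2), N✶.Dep D ↔ ∃ i, K i ⊆ D := by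
    intro D
    rw [Matroid.dep_iff, hEdual, and_iff_left (subset_univ D),
      Matroid.dual_indep_iff_exists', hE]
    simp only [subset_univ, true_and]
    constructor
    · intro hni
      by_contra hno
      push_neg at hno
      have h' : ∀ i : Fin n, ∃ x, x ∉ D ∧ x.1 ≠ i := by
        intro i
        obtain ⟨x, hx1, hx2⟩ := Set.not_subset.1 (hno i)
        exact ⟨x, hx2, (hKmem i x).1 hx1⟩
      obtain ⟨x, hxD, _⟩ := h' ⟨0, by omega⟩
      obtain ⟨y, hyD, hyx⟩ := h' x.1
      refine hni ⟨{y, x}, hBase y x hyx, ?_⟩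
      rw [Set.disjoint_right]
      rintro z (rfl | rfl) <;> assumption
    · rintro ⟨i, hKD⟩ ⟨B, hB, hdisj⟩
      obtain ⟨x, hxB, y, hyB, hxy⟩ := hBaseFst B hB
      have hx : x ∉ D := (Set.disjoint_right.1 hdisj) hxB
      have hy : y ∉ D := (Set.disjoint_right.1 hdisj) hyB
      have hxi : x.1 = i := by
        by_contra h'
        exact hx (hKD ((hKmem i x).2 h'))
      have hyi : y.1 = i := by
        by_contra h'
        exact hy (hKD ((hKmem i y).2 h'))
      exact hxy (hxi.trans hyi.symm)
  -- circuits of the dual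
  have hMcirc : ∀ C, Circuit N✶ C ↔ ∃ i, C = K i := by
    intro C
    constructor
    · rintro ⟨hCdep, hmin⟩
      obtain ⟨i, hKC⟩ := (hMdep C).1 hCdep
      have hKdep : N✶.Dep (K i) := (hMdep _).2 ⟨i, Subset.rfl⟩
      exact ⟨i, (hmin hKdep hKC).antisymm hKC⟩
    · rintro ⟨i, rfl⟩
      refine ⟨(hMdep _).2 ⟨i, Subset.rfl⟩, fun D hD hDK => ?_⟩
      obtain ⟨j, hjD⟩ := (hMdep D).1 hD
      have hji : j = i := by
        by_contra hji
        have h1 : ((i, 0) : Fin n × Fin 2) ∈ K j := (hKmem j _).2 (fun h => hji h.symm)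
        have h2 := hDK (hjD h1)
        rw [hKmem] at h2
        exact h2 rfl
      subst hji
      exact hjD
  -- independence of subsets in the dual
  have hMindep : ∀ I : Set (Fin n × Fin 2), N✶.Indep I ↔ ∀ i, ¬ K i ⊆ I := by
    intro I
    rw [Matroid.indep_iff_not_dep, hEdual, and_iff_left (subset_univ I), hMdep]
    push_neg
    rfl
  -- Claim 1 : circuits of the dual are closed
  have hclosed : ∀ C, Circuit N✶ C → (N✶).closure C = C := by
    intro C hC
    obtain ⟨i, rfl⟩ := (hMcirc C).1 hC
    refine subset_antisymm ?_ ((N✶).subset_closure _ (by rw [hEdual]; exact subset_univ _))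
    intro e he
    by_contra heK
    have hei : e.1 = i := by
      by_contra h'
      exact heK ((hKmem i e).2 h')
    obtain ⟨I, hI⟩ := (N✶).exists_isBasis (K i) (by rw [hEdual]; exact subset_univ _)
    have heI : e ∉ I := fun h => heK (hI.subset h)
    rw [← hI.closure_eq_closure, hI.indep.mem_closure_iff_of_notMem heI] at he
    obtain ⟨j, hjI⟩ := (hMdep _).1 he
    have hInd := (hMindep I).1 hI.indep
    -- the "other" parallel element of e
    set e' : Fin n × Fin 2 := (i, e.2 + 1) with he'def
    have he'K : e' ∉ K i := by rw [hKmem]; simp [he'def]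
    have he'e : e' ≠ e := by
      intro h
      have h2 : e.2 + 1 = e.2 := by
        have := congrArg Prod.snd h
        simpa [he'def] using this
      obtain ⟨e1, e2⟩ := e
      fin_cases e2 <;> simp_all
    have he'I : e' ∉ I := fun h => he'K (hI.subset h)
    have hjieq : j = i := by
      by_contra hji
      have h1 : e' ∈ K j := (hKmem j _).2 (fun h => hji h.symm)
      rcases hjI h1 with h2 | h2
      · exact he'e h2
      · exact he'I h2
    subst hjieq
    have : K j ⊆ I := by
      intro z hz
      rcases hjI hz with h2 | h2
      · exact absurd (h2 ▸ hz) heK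
      · exact h2
    exact hInd j this
  -- the set of all circuits is a tropical basis
  have hTBfull : TropicalBasis N✶ {C | Circuit N✶ C} := by
    refine ⟨fun C h => h, fun X hX hne => ?_⟩
    have hXcl : X ⊆ (N✶).closure X := (N✶).subset_closure X hX
    obtain ⟨e, hecl, heX⟩ : ∃ e, e ∈ (N✶).closure X ∧ e ∉ X := by
      by_contra h'
      push_neg at h'
      exact hne (subset_antisymm h' hXcl)
    obtain ⟨I, hI⟩ := (N✶).exists_isBasis X hX
    have heI : e ∉ I := fun h => heX (hI.subset h)
    rw [← hI.closure_eq_closure, hI.indep.mem_closure_iff_of_notMem heI] at hecl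
    obtain ⟨j, hjI⟩ := (hMdep _).1 hecl
    have heKj : e ∈ K j := by
      by_contra h'
      exact (hMindep I).1 hI.indep j (fun z hz => ((hjI hz).resolve_left
        (fun h => h' (h ▸ hz))))
    refine ⟨K j, (hMcirc _).2 ⟨j, rfl⟩, ?_⟩
    have : K j \ X = {e} := by
      apply subset_antisymm
      · rintro z ⟨hz1, hz2⟩
        rcases hjI hz1 with h | h
        · exact h
        · exact absurd (hI.subset h) hz2
      · rintro z rfl
        exact ⟨heKj, heX⟩
    rw [this, Set.ncard_singleton]
  -- every tropical basis contains every circuit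
  have hforce : ∀ B, TropicalBasis N✶ B → ∀ C, Circuit N✶ C → C ∈ B := by
    intro B hB C hC
    obtain ⟨i, rfl⟩ := (hMcirc C).1 hC
    -- pick j₀ ≠ i
    obtain ⟨j₀, hj₀⟩ : ∃ j₀ : Fin n, j₀ ≠ i := by
      by_cases h0 : i = ⟨0, by omega⟩
      · exact ⟨⟨1, by omega⟩, by rw [h0]; simp⟩
      · exact ⟨⟨0, by omega⟩, fun h => h0 h.symm⟩
    set z : Fin n × Fin 2 := (j₀, 0) with hzdef
    have hzK : z ∈ K i := (hKmem i z).2 hj₀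
    set X : Set (Fin n × Fin 2) := K i \ {z} with hXdef
    have hzX : z ∉ X := by simp [hXdef]
    have hXind : N✶.Indep X := by
      rw [hMindep]
      intro k hk
      by_cases hki : k = i
      · exact hzX (hk (hki ▸ hzK))
      · have h1 : ((i, 0) : Fin n × Fin 2) ∈ K k := (hKmem k _).2 (fun h => hki h.symm)
        have := (hk h1).1
        rw [hKmem] at this
        exact this rfl
    have hins : insert z X = K i := by
      rw [hXdef, Set.insert_diff_singleton, Set.insert_eq_self.2 hzK]
    have hzcl : z ∈ (N✶).closure X := by
      have hdep : N✶.Dep (insert z X) := by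
        rw [hins, hMdep]; exact ⟨i, Subset.rfl⟩
      exact ((hXind.insert_dep_iff).1 hdep).1
    have hclne : (N✶).closure X ≠ X := fun h => hzX (h ▸ hzcl)
    obtain ⟨C, hCB, hC1⟩ := hB.2 X (by rw [hEdual]; exact subset_univ _) hclne
    obtain ⟨j, rfl⟩ := (hMcirc C).1 (hB.1 C hCB)
    have hjeq : j = i := by
      by_contra hji
      have h0 : ((i, 0) : Fin n × Fin 2) ∈ K j \ X := by
        constructor
        · exact (hKmem j _).2 (fun h => hji h.symm)
        · rw [hXdef]
          rintro ⟨h1, -⟩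
          rw [hKmem] at h1
          exact h1 rfl
      have h1 : ((i, 1) : Fin n × Fin 2) ∈ K j \ X := by
        constructor
        · exact (hKmem j _).2 (fun h => hji h.symm)
        · rw [hXdef]
          rintro ⟨h1, -⟩
          rw [hKmem] at h1
          exact h1 rfl
      have hne01 : ((i, 0) : Fin n × Fin 2) ≠ (i, 1) := by simp
      have : 1 < (K j \ X).ncard := (Set.one_lt_ncard (toFinite _)).2 ⟨_, h0, _, h1, hne01⟩
      omega
    subst hjeq
    exact hCB
  have hTBeq : ∀ B, TropicalBasis N✶ B → B = {C | Circuit N✶ C} :=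
    fun B hB => subset_antisymm (fun C hC => hB.1 C hC) (fun C hC => hforce B hB C hC)
  refine ⟨hclosed, fun B => ⟨fun h => hTBeq B h.1, ?_⟩⟩
  rintro rfl
  refine ⟨hTBfull, fun C hC hTB' => ?_⟩
  have := hTBeq _ hTB'
  have hmem : C ∈ {C | Circuit N✶ C} \ {C} := by rw [this]; exact hC
  exact hmem.2 rfl
end TropicalPaper
end

section
/- Let 𝒞' be a tropical basis of a simple matroid M containing a circuit C with f ∈ cl(C) \ C, and let D₁ ∪ ... ∪ D_k ∪ {f} be the canonical partition of the double circuit C ∪ {f}. Then 𝒞'' := (𝒞' \ {C}) ∪ { (C ∪ {f}) \ D_i : 1 ≤ i ≤ k } is also a tropical basis of M. -/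
open Set

namespace TropicalPaper

variable {α : Type*}

theorem stmt13 (M : Matroid α) [M.Finite] (hM : Simple M)
    (𝒞' : Set (Set α)) (hTB : TropicalBasis M 𝒞')
    (C : Set α) (hC : C ∈ 𝒞') (f : α) (hf : f ∈ M.closure C \ C)
    (P : Set (Set α)) (hfP : {f} ∉ P)
    (hP : DCPartition M (C ∪ {f}) (insert {f} P)) :
    TropicalBasis M ((𝒞' \ {C}) ∪ (fun p => (C ∪ {f}) \ p) '' P) := by
  obtain ⟨hTB1, hTB2⟩ := hTB
  obtain ⟨hne, hsub, hdisj, hunion, hcirc⟩ := hP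
  have hfC : f ∉ C := hf.2
  have hfp : ∀ p ∈ P, f ∉ p := by
    intro p hp hfmem
    have h1 : ({f} : Set α) ≠ p := fun h => hfP (h ▸ hp)
    have h2 := hdisj (mem_insert _ _) (mem_insert_of_mem _ hp) h1
    exact (disjoint_left.mp h2 rfl) hfmem
  have hunion' : {f} ∪ ⋃₀ P = C ∪ {f} := by rw [← sUnion_insert]; exact hunion
  have hUP : ⋃₀ P = C := by
    apply subset_antisymm
    · intro x hx
      obtain ⟨p, hp, hxp⟩ := hx
      have hxD : x ∈ C ∪ {f} := by
        rw [← hunion']; exact Or.inr ⟨p, hp, hxp⟩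
      rcases hxD with h1 | h1
      · exact h1
      · rw [mem_singleton_iff] at h1; subst h1; exact absurd hxp (hfp p hp)
    · intro x hxC
      have hxD : x ∈ ({f} : Set α) ∪ ⋃₀ P := by rw [hunion']; exact Or.inl hxC
      rcases hxD with h1 | h1
      · rw [mem_singleton_iff] at h1; subst h1; exact absurd hxC hfC
      · exact h1
  have hpsubC : ∀ p ∈ P, p ⊆ C := fun p hp x hx => hUP ▸ ⟨p, hp, hx⟩
  constructor
  · rintro C'' (⟨hC'', -⟩ | ⟨p, hp, rfl⟩)
    · exact hTB1 _ hC''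
    · exact ((hcirc _).mpr ⟨p, mem_insert_of_mem _ hp, rfl⟩).1
  · intro X hX hclX
    obtain ⟨C₀, hC₀, hcard⟩ := hTB2 X hX hclX
    by_cases hC₀C : C₀ = C
    swap
    · exact ⟨C₀, Or.inl ⟨hC₀, hC₀C⟩, hcard⟩
    subst hC₀C
    obtain ⟨g, hg⟩ := ncard_eq_one.mp hcard
    have hgdiff : g ∈ C₀ \ X := by rw [hg]; exact rfl
    obtain ⟨hgC, hgX⟩ := hgdiff
    have hgU : g ∈ ⋃₀ P := by rw [hUP]; exact hgC
    obtain ⟨pg, hpg, hgpg⟩ := hgU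
    by_cases hfX : f ∈ X
    · -- need a part different from pg
      have hex : ∃ p ∈ P, p ≠ pg := by
        by_contra hcon
        push_neg at hcon
        have hpgC : pg = C₀ := by
          apply subset_antisymm (hpsubC pg hpg)
          intro x hx
          obtain ⟨p, hp, hxp⟩ : x ∈ ⋃₀ P := by rw [hUP]; exact hx
          exact (hcon p hp) ▸ hxp
        have hcf : Circuit M ((C₀ ∪ {f}) \ pg) :=
          ((hcirc _).mpr ⟨pg, mem_insert_of_mem _ hpg, rfl⟩).1
        have heq : (C₀ ∪ {f}) \ pg = {f} := by
          rw [hpgC]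
          ext x
          simp only [mem_diff, mem_union, mem_singleton_iff]
          constructor
          · rintro ⟨h1 | h1, h2⟩
            · exact absurd h1 h2
            · exact h1
          · rintro rfl; exact ⟨Or.inr rfl, hfC⟩
        have h3 := hM _ hcf
        rw [heq, ncard_singleton] at h3
        omega
      obtain ⟨p, hp, hppg⟩ := hex
      have hgp : g ∉ p := by
        have hd := hdisj (mem_insert_of_mem _ hp) (mem_insert_of_mem _ hpg)
          (fun h => hppg h)
        exact fun hgp => (disjoint_left.mp hd hgp) hgpg
      refine ⟨(C₀ ∪ {f}) \ p, Or.inr ⟨p, hp, rfl⟩, ?_⟩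
      have heq : ((C₀ ∪ {f}) \ p) \ X = {g} := by
        ext x
        constructor
        · rintro ⟨⟨hxD, hxp⟩, hxX⟩
          rcases hxD with h1 | h1
          · have hx' : x ∈ C₀ \ X := ⟨h1, hxX⟩
            rw [hg] at hx'; exact hx'
          · rw [mem_singleton_iff] at h1; subst h1; exact absurd hfX hxX
        · intro hx
          rw [mem_singleton_iff] at hx; subst hx
          exact ⟨⟨Or.inl hgC, hgp⟩, hgX⟩
      rw [heq, ncard_singleton]
    · refine ⟨(C₀ ∪ {f}) \ pg, Or.inr ⟨pg, hpg, rfl⟩, ?_⟩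
      have heq : ((C₀ ∪ {f}) \ pg) \ X = {f} := by
        ext x
        constructor
        · rintro ⟨⟨hxD, hxp⟩, hxX⟩
          rcases hxD with h1 | h1
          · have hx' : x ∈ C₀ \ X := ⟨h1, hxX⟩
            rw [hg, mem_singleton_iff] at hx'
            subst hx'; exact absurd hgpg hxp
          · exact h1
        · intro hx
          rw [mem_singleton_iff] at hx; subst hx
          exact ⟨⟨Or.inr rfl, hfp pg hpg⟩, hfX⟩
      rw [heq, ncard_singleton]
end TropicalPaper
end

section
/- A simple matroid M has a unique minimal tropical basis if and only if for every subset X of the ground set, X is closed exactly when its complement is orthogonal to the family of closed circuits of M (i.e., |C ∩ (E \ X)| ≠ 1 for every circuit C with cl(C) = C). -/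
open Set

namespace TropicalPaper

variable {α : Type*}

section Aux

variable {M : Matroid α} {B C C' D X : Set α} {e f : α}

lemma Circuit.dep (hC : Circuit M C) : M.Dep C := hC.1

lemma Circuit.subset_ground (hC : Circuit M C) : C ⊆ M.E := hC.1.subset_ground

lemma Circuit.nonempty (hC : Circuit M C) : C.Nonempty := by
  rw [nonempty_iff_ne_empty]
  rintro rfl
  exact hC.dep.1 M.empty_indep

lemma Circuit.diff_singleton_indep (hC : Circuit M C) (he : e ∈ C) :
    M.Indep (C \ {e}) := by
  by_contra h
  have hdep : M.Dep (C \ {e}) :=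
    (M.not_indep_iff (diff_subset.trans hC.subset_ground)).1 h
  exact ((hC.2 hdep diff_subset) he).2 rfl

lemma Circuit.mem_closure_diff_singleton (hC : Circuit M C) (he : e ∈ C) :
    e ∈ M.closure (C \ {e}) := by
  have hI := hC.diff_singleton_indep he
  by_contra h
  have hind : M.Indep (insert e (C \ {e})) := by
    rw [hI.insert_indep_iff]
    exact Or.inl ⟨hC.subset_ground he, h⟩
  rw [insert_diff_singleton, insert_eq_of_mem he] at hind
  exact hC.dep.1 hind

lemma Circuit.closure_diff_singleton_eq (hC : Circuit M C) (hf : f ∈ C) :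
    M.closure (C \ {f}) = M.closure C := by
  have h := Matroid.closure_insert_eq_of_mem_closure
    (hC.mem_closure_diff_singleton hf)
  rw [insert_diff_singleton, insert_eq_of_mem hf] at h
  exact h.symm

lemma exists_circuit_subset_of_dep_aux (M : Matroid α) [M.Finite] :
    ∀ n (D : Set α), D.ncard ≤ n → M.Dep D → ∃ C ⊆ D, Circuit M C := by
  intro n
  induction n with
  | zero =>
    intro D hcard hD
    have hfin : D.Finite := M.ground_finite.subset hD.subset_ground
    have hDe : D = ∅ := by rwa [Nat.le_zero, Set.ncard_eq_zero hfin] at hcard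
    exact absurd ((hDe ▸ hD).1) (by simp [M.empty_indep])
  | succ n ih =>
    intro D hcard hD
    by_cases h : Minimal M.Dep D
    · exact ⟨D, subset_rfl, h⟩
    · rw [Minimal] at h
      push_neg at h
      obtain ⟨D', hD', hsub, hns⟩ := h hD
      have hss : D' ⊂ D := ⟨hsub, hns⟩
      have hfin : D.Finite := M.ground_finite.subset hD.subset_ground
      have hlt : D'.ncard < D.ncard := Set.ncard_lt_ncard hss hfin
      obtain ⟨C, hCD', hC⟩ := ih D' (by omega) hD'
      exact ⟨C, hCD'.trans hsub, hC⟩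

lemma exists_circuit_subset_of_dep [M.Finite] (hD : M.Dep D) :
    ∃ C ⊆ D, Circuit M C :=
  exists_circuit_subset_of_dep_aux M D.ncard D le_rfl hD

lemma exists_circuit_of_mem_closure [M.Finite] (hX : X ⊆ M.E)
    (he : e ∈ M.closure X) (heX : e ∉ X) :
    ∃ C, Circuit M C ∧ C ⊆ insert e X ∧ C \ X = {e} := by
  obtain ⟨I, hI⟩ := M.exists_isBasis X hX
  have heI : e ∈ M.closure I := by rwa [hI.closure_eq_closure]
  have heI' : e ∉ I := fun h => heX (hI.subset h)
  have heE : e ∈ M.E := M.closure_subset_ground X he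
  have hdep : M.Dep (insert e I) := by
    rw [Matroid.dep_iff]
    refine ⟨fun hind => ?_, insert_subset heE hI.indep.subset_ground⟩
    rw [hI.indep.insert_indep_iff] at hind
    rcases hind with h | h
    · exact h.2 heI
    · exact heI' h
  obtain ⟨C, hCsub, hC⟩ := exists_circuit_subset_of_dep hdep
  have heC : e ∈ C := by
    by_contra h
    have hCI : C ⊆ I := fun x hx => ((hCsub hx).resolve_left (by rintro rfl; exact h hx))
    exact hC.dep.1 (hI.indep.subset hCI)
  refine ⟨C, hC, hCsub.trans (insert_subset_insert hI.subset), ?_⟩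
  apply subset_antisymm
  · rintro x ⟨hxC, hxX⟩
    rcases hCsub hxC with rfl | hxI
    · rfl
    · exact absurd (hI.subset hxI) hxX
  · rintro x rfl
    exact ⟨heC, heX⟩

/-- Strong circuit elimination, in closure form. -/
lemma strong_elim_closure {C₁ C₂ : Set α} {u v : α} (hC1 : Circuit M C₁)
    (hC2 : Circuit M C₂) (hu : u ∈ C₁ ∩ C₂) (hv : v ∈ C₁ \ C₂) :
    v ∈ M.closure ((C₁ ∪ C₂) \ {u, v}) := by
  set A := (C₁ ∪ C₂) \ {u, v} with hA
  have hu' : u ∈ M.closure A := by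
    refine M.closure_subset_closure (show C₂ \ {u} ⊆ A from ?_)
      (hC2.mem_closure_diff_singleton hu.2)
    rintro x ⟨hx, hxu⟩
    refine ⟨Or.inr hx, ?_⟩
    rintro (rfl | rfl)
    · exact hxu rfl
    · exact hv.2 hx
  have hAeq : M.closure (insert u A) = M.closure A :=
    Matroid.closure_insert_eq_of_mem_closure hu'
  have h2 : v ∈ M.closure (C₁ \ {v}) := hC1.mem_closure_diff_singleton hv.1
  have hsub : C₁ \ {v} ⊆ insert u A := by
    rintro x ⟨hx, hxv⟩
    by_cases hxu : x = u
    · exact Or.inl hxu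
    · exact Or.inr ⟨Or.inl hx, by rintro (rfl | rfl); exact hxu rfl; exact hxv rfl⟩
  exact hAeq ▸ (M.closure_subset_closure hsub h2)

/-- Given a circuit `C`, `e ∈ cl C \ C` and `f ∈ C`, there is a circuit inside
`C ∪ {e}` containing both `e` and `f`. -/
lemma exists_circuit_through [M.Finite] (hM : Simple M) (hC : Circuit M C)
    (he : e ∈ M.closure C) (heC : e ∉ C) (hf : f ∈ C) :
    ∃ C', Circuit M C' ∧ C' ⊆ insert e C ∧ e ∈ C' ∧ f ∈ C' := by
  have he' : e ∈ M.closure (C \ {f}) := by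
    rw [hC.closure_diff_singleton_eq hf]; exact he
  have hef : e ∉ C \ {f} := fun h => heC h.1
  obtain ⟨Cf, hCf, hCfsub, hCfdiff⟩ := exists_circuit_of_mem_closure
    (diff_subset.trans hC.subset_ground) he' hef
  have heCf : e ∈ Cf := by
    have : e ∈ Cf \ (C \ {f}) := hCfdiff ▸ rfl
    exact this.1
  have hfCf : f ∉ Cf := by
    intro h
    have hmem : f ∈ Cf \ (C \ {f}) := ⟨h, by simp⟩
    rw [hCfdiff, mem_singleton_iff] at hmem
    exact heC (hmem ▸ hf)
  have hne : (Cf \ {e}).Nonempty := by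
    rw [nonempty_iff_ne_empty]
    intro hemp
    have hsub : Cf ⊆ {e} := by
      intro x hx
      by_contra hxe
      exact absurd (show x ∈ Cf \ {e} from ⟨hx, hxe⟩) (hemp ▸ notMem_empty x)
    have := (hM _ hCf).trans (Set.ncard_le_ncard hsub (finite_singleton e))
    simp [Set.ncard_singleton] at this
  obtain ⟨g, hgCf, hge⟩ := hne
  have hgC : g ∈ C := by
    rcases hCfsub hgCf with rfl | h
    · exact absurd rfl hge
    · exact h.1
  have hgf : g ≠ f := fun h => hfCf (h ▸ hgCf)
  have hv : f ∈ M.closure ((C ∪ Cf) \ {g, f}) :=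
    strong_elim_closure hC hCf ⟨hgC, hgCf⟩ ⟨hf, hfCf⟩
  have hAg : (C ∪ Cf) \ {g, f} ⊆ M.E := by
    refine diff_subset.trans (union_subset hC.subset_ground hCf.subset_ground)
  have hfA : f ∉ (C ∪ Cf) \ {g, f} := fun h => h.2 (Or.inr rfl)
  obtain ⟨C₃, hC₃, hC₃sub, hC₃diff⟩ := exists_circuit_of_mem_closure hAg hv hfA
  have hfC₃ : f ∈ C₃ := by
    have hmem : f ∈ C₃ \ ((C ∪ Cf) \ {g, f}) := by
      rw [hC₃diff]; exact mem_singleton f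
    exact hmem.1
  have hC₃D : C₃ ⊆ insert e C := by
    intro x hx
    rcases hC₃sub hx with rfl | hx'
    · exact Or.inr hf
    · rcases hx'.1 with h | h
      · exact Or.inr h
      · rcases hCfsub h with rfl | h2
        · exact Or.inl rfl
        · exact Or.inr h2.1
  have hgC₃ : g ∉ C₃ := by
    intro hgc
    rcases hC₃sub hgc with h' | h'
    · exact hgf h'
    · exact h'.2 (Or.inl rfl)
  have heC₃ : e ∈ C₃ := by
    by_contra h
    have hsubC : C₃ ⊆ C := fun x hx =>
      (hC₃D hx).resolve_left (by rintro rfl; exact h hx)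
    exact hgC₃ (hC.2 hC₃.dep hsubC hgC)
  exact ⟨C₃, hC₃, hC₃D, heC₃, hfC₃⟩

/-- Rigidity of a closed circuit: any circuit `C'` with `|C' \ (C\{e})| = 1` equals `C`. -/
lemma eq_of_diff_ncard_one (hC : Circuit M C) (hcl : M.closure C = C) (he : e ∈ C)
    (hC' : Circuit M C') (h1 : (C' \ (C \ {e})).ncard = 1) : C' = C := by
  obtain ⟨f, hf⟩ := Set.ncard_eq_one.1 h1
  have hfmem : f ∈ C' \ (C \ {e}) := hf ▸ rfl
  have hfcl : f ∈ M.closure (C \ {e}) := by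
    refine M.closure_subset_closure (show C' \ {f} ⊆ C \ {e} from ?_)
      (hC'.mem_closure_diff_singleton hfmem.1)
    rintro x ⟨hx, hxf⟩
    by_contra hxX
    have : x ∈ C' \ (C \ {e}) := ⟨hx, hxX⟩
    rw [hf, mem_singleton_iff] at this
    exact hxf this
  have hfC : f ∈ C := by
    have hclsub : M.closure (C \ {e}) ⊆ C :=
      (M.closure_subset_closure diff_subset).trans (subset_of_eq hcl)
    exact hclsub hfcl
  have hfe : f = e := by
    by_contra h
    exact hfmem.2 ⟨hfC, h⟩
  have hsub : C' ⊆ C := by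
    intro x hx
    by_cases hxX : x ∈ C \ {e}
    · exact hxX.1
    · have : x ∈ C' \ (C \ {e}) := ⟨hx, hxX⟩
      rw [hf, mem_singleton_iff] at this
      exact this ▸ (hfe ▸ hfC)
  exact subset_antisymm hsub (hC.2 hC'.dep hsub)

lemma closed_circuit_mem {ℬ : Set (Set α)} (hB : TropicalBasis M ℬ) (hC : Circuit M C)
    (hcl : M.closure C = C) : C ∈ ℬ := by
  obtain ⟨e, he⟩ := hC.nonempty
  have hX : C \ {e} ⊆ M.E := diff_subset.trans hC.subset_ground
  have hnc : M.closure (C \ {e}) ≠ C \ {e} := by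
    intro h
    have h2 := hC.mem_closure_diff_singleton he
    rw [h] at h2
    exact h2.2 rfl
  obtain ⟨C', hC'B, h1⟩ := hB.2 _ hX hnc
  have := eq_of_diff_ncard_one hC hcl he (hB.1 _ hC'B) h1
  exact this ▸ hC'B

lemma exists_minimal_TB_aux (M : Matroid α) [M.Finite] :
    ∀ n (B : Set (Set α)), B.ncard ≤ n → TropicalBasis M B →
      ∃ B' ⊆ B, MinimalTropicalBasis M B' := by
  have hBfin : ∀ B : Set (Set α), (∀ C ∈ B, Circuit M C) → B.Finite := by
    intro B hB
    refine (M.ground_finite.finite_subsets).subset ?_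
    intro C hC
    exact (hB C hC).subset_ground
  intro n
  induction n with
  | zero =>
    intro B hcard hB
    have hfin := hBfin B hB.1
    have hBe : B = ∅ := by rwa [Nat.le_zero, Set.ncard_eq_zero hfin] at hcard
    exact ⟨B, subset_rfl, hB, by simp [hBe]⟩
  | succ n ih =>
    intro B hcard hB
    by_cases h : ∀ C ∈ B, ¬ TropicalBasis M (B \ {C})
    · exact ⟨B, subset_rfl, hB, h⟩
    · push_neg at h
      obtain ⟨C, hCB, hTB⟩ := h
      have hfin := hBfin B hB.1
      have hlt : (B \ {C}).ncard < B.ncard :=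
        Set.ncard_lt_ncard (sdiff_singleton_ssubset.2 hCB) hfin
      obtain ⟨B', hB'sub, hB'⟩ := ih (B \ {C}) (by omega) hTB
      exact ⟨B', hB'sub.trans diff_subset, hB'⟩

lemma exists_minimal_TB [M.Finite] {ℬ : Set (Set α)} (hB : TropicalBasis M ℬ) :
    ∃ B' ⊆ ℬ, MinimalTropicalBasis M B' :=
  exists_minimal_TB_aux M ℬ.ncard ℬ le_rfl hB

lemma closed_not_diff_ncard_one (hX : M.closure X = X) (hD : Circuit M D) :
    (D \ X).ncard ≠ 1 := by
  intro h1
  obtain ⟨f, hf⟩ := Set.ncard_eq_one.1 h1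
  have hfmem : f ∈ D \ X := hf ▸ rfl
  have hsub : D \ {f} ⊆ X := by
    rintro x ⟨hx, hxf⟩
    by_contra hxX
    have : x ∈ D \ X := ⟨hx, hxX⟩
    rw [hf, mem_singleton_iff] at this
    exact hxf this
  have : f ∈ M.closure X :=
    M.closure_subset_closure hsub (hD.mem_closure_diff_singleton hfmem.1)
  rw [hX] at this
  exact hfmem.2 this

lemma inter_diff_eq (hD : D ⊆ M.E) : (M.E \ X) ∩ D = D \ X := by
  ext x
  simp only [mem_inter_iff, mem_diff]
  exact ⟨fun h => ⟨h.2, h.1.2⟩, fun h => ⟨⟨hD h.1, h.2⟩, h.1⟩⟩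


end Aux

theorem stmt14 (M : Matroid α) [M.Finite] (hM : Simple M) :
    (∃! B, MinimalTropicalBasis M B) ↔
      ∀ X ⊆ M.E,
        (Orthogonal (M.E \ X) {C | Circuit M C ∧ M.closure C = C} ↔
          M.closure X = X) := by
  set T : Set (Set α) := {C | Circuit M C ∧ M.closure C = C} with hT
  constructor
  · rintro ⟨B, hB, huniq⟩
    have hBT : ∀ C ∈ B, M.closure C = C := by
      intro C hCB
      by_contra hncl
      have hC : Circuit M C := hB.1.1 C hCB
      have hssub : C ⊂ M.closure C :=
        (M.subset_closure C hC.subset_ground).ssubset_of_ne (Ne.symm hncl)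
      obtain ⟨e, hecl, heC⟩ := exists_of_ssubset hssub
      set S : Set (Set α) := {C' | Circuit M C' ∧ C' ⊆ insert e C ∧ e ∈ C'} with hS
      set B2 : Set (Set α) := (B \ {C}) ∪ S with hB2
      have hTB2 : TropicalBasis M B2 := by
        constructor
        · rintro C' (⟨h, _⟩ | h)
          · exact hB.1.1 C' h
          · exact h.1
        · intro X hX hnclX
          obtain ⟨W, hWB, h1⟩ := hB.1.2 X hX hnclX
          by_cases hWC : W = C
          · subst hWC
            obtain ⟨f, hf⟩ := Set.ncard_eq_one.1 h1
            have hfmem : f ∈ W \ X := by rw [hf]; exact mem_singleton f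
            by_cases heX : e ∈ X
            · obtain ⟨C₃, hC₃, hsub, heC₃, hfC₃⟩ :=
                exists_circuit_through hM hC hecl heC hfmem.1
              refine ⟨C₃, Or.inr ⟨hC₃, hsub, heC₃⟩, ?_⟩
              have heq : C₃ \ X = {f} := by
                apply subset_antisymm
                · rintro x ⟨hx, hxX⟩
                  rcases hsub hx with rfl | hxC
                  · exact absurd heX hxX
                  · have hx2 : x ∈ W \ X := ⟨hxC, hxX⟩
                    rw [hf] at hx2
                    exact hx2
                · rintro x hx
                  rw [mem_singleton_iff] at hx
                  subst hx
                  exact ⟨hfC₃, hfmem.2⟩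
              rw [heq, Set.ncard_singleton]
            · have he' : e ∈ M.closure (W \ {f}) := by
                rw [hC.closure_diff_singleton_eq hfmem.1]; exact hecl
              obtain ⟨Cf, hCf, hCfsub, hCfdiff⟩ := exists_circuit_of_mem_closure
                (diff_subset.trans hC.subset_ground) he' (fun h => heC h.1)
              have heCf : e ∈ Cf := by
                have hmem : e ∈ Cf \ (W \ {f}) := by rw [hCfdiff]; exact mem_singleton e
                exact hmem.1
              refine ⟨Cf, Or.inr ⟨hCf, hCfsub.trans (insert_subset_insert diff_subset),
                heCf⟩, ?_⟩
              have heq : Cf \ X = {e} := by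
                apply subset_antisymm
                · rintro x ⟨hx, hxX⟩
                  rcases hCfsub hx with rfl | hxC
                  · rfl
                  · have h2 : x ∈ W \ X := ⟨hxC.1, hxX⟩
                    rw [hf, mem_singleton_iff] at h2
                    exact absurd h2 hxC.2
                · rintro x hx
                  rw [mem_singleton_iff] at hx
                  subst hx
                  exact ⟨heCf, heX⟩
              rw [heq, Set.ncard_singleton]
          · exact ⟨W, Or.inl ⟨hWB, hWC⟩, h1⟩
      obtain ⟨B'', hB''sub, hB''⟩ := exists_minimal_TB hTB2
      have heqB : B'' = B := huniq B'' hB''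
      have hCB2 : C ∈ B2 := hB''sub (heqB ▸ hCB)
      rcases hCB2 with ⟨_, hne⟩ | hS'
      · exact hne rfl
      · exact heC hS'.2.2
    intro X hX
    constructor
    · intro horth
      by_contra hnclX
      obtain ⟨W, hWB, h1⟩ := hB.1.2 X hX hnclX
      have hWT : W ∈ T := ⟨hB.1.1 W hWB, hBT W hWB⟩
      apply horth W hWT
      rw [inter_diff_eq (hB.1.1 W hWB).subset_ground]
      exact h1
    · intro hclX D hD
      rw [inter_diff_eq hD.1.subset_ground]
      exact closed_not_diff_ncard_one hclX hD.1
  · intro hR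
    have hTB : TropicalBasis M T := by
      refine ⟨fun C hC => hC.1, fun X hX hnclX => ?_⟩
      have horth : ¬ Orthogonal (M.E \ X) T := fun h => hnclX ((hR X hX).1 h)
      unfold Orthogonal at horth
      push_neg at horth
      obtain ⟨D, hD, h1⟩ := horth
      refine ⟨D, hD, ?_⟩
      rwa [inter_diff_eq hD.1.subset_ground] at h1
    have hMin : MinimalTropicalBasis M T := by
      refine ⟨hTB, fun C hC hTB' => ?_⟩
      obtain ⟨e, he⟩ := hC.1.nonempty
      have hXsub : C \ {e} ⊆ M.E := diff_subset.trans hC.1.subset_ground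
      have hnc : M.closure (C \ {e}) ≠ C \ {e} := by
        intro h
        have h2 := hC.1.mem_closure_diff_singleton he
        rw [h] at h2
        exact h2.2 rfl
      obtain ⟨C', hC', h1⟩ := hTB'.2 _ hXsub hnc
      have heq := eq_of_diff_ncard_one hC.1 hC.2 he (hTB'.1 _ hC') h1
      exact hC'.2 (mem_singleton_iff.mpr heq)
    refine ⟨T, hMin, fun B hB => ?_⟩
    have h1 : T ⊆ B := fun C hC => closed_circuit_mem hB.1 hC.1 hC.2
    have h2 : B ⊆ T := by
      by_contra h
      obtain ⟨D, hDB, hDT⟩ := not_subset.1 h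
      apply hB.2 D hDB
      refine ⟨fun C hC => hB.1.1 C hC.1, fun X hX hnclX => ?_⟩
      obtain ⟨W, hWT, hW1⟩ := hTB.2 X hX hnclX
      refine ⟨W, ⟨h1 hWT, fun hWD => hDT ?_⟩, hW1⟩
      rw [← mem_singleton_iff.1 hWD]
      exact hWT
    exact subset_antisymm h2 h1
end TropicalPaper
end

section
/- The matroid P₇ has a unique minimal tropical basis. Specifically, in P₇ every subset X that is not closed has its complement non-orthogonal to the family of three-point lines (closed circuits of size 3): there is a 3-point line L with |L \ X| = 1. -/
open Set

namespace TropicalPaper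

set_option maxRecDepth 40000

variable {α : Type*}

/-- The five 3-point lines of the matroid `P₇`. -/
def P7Lines : Set (Set (Fin 7)) :=
  {{0, 1, 2}, {0, 3, 4}, {0, 5, 6}, {1, 3, 5}, {2, 4, 6}}

def linesF : Finset (Finset (Fin 7)) := {{0,1,2},{0,3,4},{0,5,6},{1,3,5},{2,4,6}}

lemma mem_P7Lines_iff {L : Set (Fin 7)} :
    L ∈ P7Lines ↔ ∃ l ∈ linesF, (↑l : Set (Fin 7)) = L := by
  simp only [P7Lines, linesF, Set.mem_insert_iff, Set.mem_singleton_iff,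
    Finset.mem_insert, Finset.mem_singleton]
  constructor
  · rintro (rfl|rfl|rfl|rfl|rfl)
    exacts [⟨{0,1,2}, by tauto, by simp⟩, ⟨{0,3,4}, by tauto, by simp⟩,
      ⟨{0,5,6}, by tauto, by simp⟩, ⟨{1,3,5}, by tauto, by simp⟩,
      ⟨{2,4,6}, by tauto, by simp⟩]
  · rintro ⟨l, (rfl|rfl|rfl|rfl|rfl), rfl⟩ <;> simp <;> tauto

lemma linecardF : ∀ l ∈ linesF, l.card = 3 := by decide

lemma linediffF : ∀ l ∈ linesF, ∀ l' ∈ linesF, (l' \ l).card ≠ 1 := by decide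

lemma pairfactF : ∀ l ∈ linesF, ∃ p q : Fin 7, p ∈ l ∧ q ∈ l ∧ p ≠ q ∧
    ∀ l' ∈ linesF, p ∈ l' → q ∈ l' → l' = l := by decide

theorem finfact : ∀ F : Finset (Fin 7), (∀ l ∈ linesF, (l \ F).card ≠ 1) →
    (∃ i ∈ F.powerset, i.card = 3 ∧ ∀ l ∈ linesF, ¬ l ⊆ i) → F = Finset.univ := by decide

lemma lines_card {L : Set (Fin 7)} (hL : L ∈ P7Lines) : L.ncard = 3 := by
  obtain ⟨l, hl, rfl⟩ := mem_P7Lines_iff.mp hL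
  rw [Set.ncard_coe_finset]; exact linecardF l hl


section Matroid

variable {M : Matroid (Fin 7)}

lemma line_circuit (hE : M.E = Set.univ)
    (hIndep : ∀ X, M.Indep X ↔ (X.ncard ≤ 3 ∧ ∀ L ∈ P7Lines, ¬ L ⊆ X))
    {L : Set (Fin 7)} (hL : L ∈ P7Lines) : Circuit M L := by
  have hcard := lines_card hL
  have hLdep : M.Dep L := by
    rw [Matroid.dep_iff]
    refine ⟨?_, by rw [hE]; exact subset_univ L⟩
    rw [hIndep]; push_neg; intro _; exact ⟨L, hL, subset_rfl⟩
  refine ⟨hLdep, fun S hS hSL => ?_⟩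
  by_contra hnot
  have hSne : S ≠ L := fun h => hnot (h ▸ subset_rfl)
  have hlt : S.ncard < 3 := by
    rw [← hcard]
    exact Set.ncard_lt_ncard (ssubset_of_subset_of_ne hSL hSne) (Set.toFinite L)
  refine hS.not_indep ?_
  rw [hIndep]
  refine ⟨by omega, fun L' hL' hsub => ?_⟩
  have h3 := lines_card hL'
  have := Set.ncard_le_ncard hsub (Set.toFinite S)
  omega

lemma closed_of_no_line (hE : M.E = Set.univ)
    (hIndep : ∀ X, M.Indep X ↔ (X.ncard ≤ 3 ∧ ∀ L ∈ P7Lines, ¬ L ⊆ X))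
    (X : Set (Fin 7)) (h : ∀ L ∈ P7Lines, (L \ X).ncard ≠ 1) : M.closure X = X := by
  have hXE : X ⊆ M.E := by rw [hE]; exact subset_univ X
  refine subset_antisymm ?_ (M.subset_closure X hXE)
  obtain ⟨I, hI⟩ := M.exists_isBasis X hXE
  obtain ⟨hIcard, hInoline⟩ := (hIndep I).mp hI.indep
  intro e he
  by_contra heX
  have heI : e ∉ I := fun h' => heX (hI.subset h')
  rw [← hI.closure_eq_closure] at he
  have hdep : M.Dep (insert e I) := ((hI.indep.mem_closure_iff).mp he).resolve_right heI
  have hnotind : ¬ M.Indep (insert e I) := hdep.not_indep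
  rcases Nat.lt_or_ge I.ncard 3 with hlt | hge
  · have hcard : (insert e I).ncard ≤ 3 := le_trans (Set.ncard_insert_le e I) (by omega)
    rw [hIndep] at hnotind
    push_neg at hnotind
    obtain ⟨L, hL, hLsub⟩ := hnotind hcard
    have heL : e ∈ L := by
      by_contra heL
      exact hInoline L hL (fun x hx => ((hLsub hx).resolve_left (by rintro rfl; exact heL hx)))
    have hLX : L \ X = {e} := by
      apply subset_antisymm
      · rintro x ⟨hxL, hxX⟩
        rcases hLsub hxL with h' | h'
        · exact h'
        · exact absurd (hI.subset h') hxX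
      · intro x hx
        rw [Set.mem_singleton_iff] at hx
        subst hx
        exact ⟨heL, heX⟩
    exact h L hL (by rw [hLX, Set.ncard_singleton])
  · have h3 : I.ncard = 3 := le_antisymm hIcard hge
    have hFu : X.toFinite.toFinset = Finset.univ := by
      apply finfact
      · intro l hl
        have hh := h (↑l) (mem_P7Lines_iff.mpr ⟨l, hl, rfl⟩)
        rw [← Set.ncard_coe_finset]
        simpa using hh
      · refine ⟨I.toFinite.toFinset, Finset.mem_powerset.mpr ?_, ?_, ?_⟩
        · exact Set.Finite.toFinset_subset_toFinset.mpr hI.subset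
        · rw [← Set.ncard_eq_toFinset_card]; exact h3
        · intro l hl hsub
          apply hInoline (↑l) (mem_P7Lines_iff.mpr ⟨l, hl, rfl⟩)
          intro x hx
          have hx' : x ∈ I.toFinite.toFinset := hsub (by simpa using hx)
          simpa using hx'
    have hXu : X = Set.univ := by
      rw [← X.toFinite.coe_toFinset, hFu, Finset.coe_univ]
    exact heX (hXu ▸ Set.mem_univ e)

lemma exists_line (hE : M.E = Set.univ)
    (hIndep : ∀ X, M.Indep X ↔ (X.ncard ≤ 3 ∧ ∀ L ∈ P7Lines, ¬ L ⊆ X))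
    (X : Set (Fin 7)) (hcl : M.closure X ≠ X) : ∃ L ∈ P7Lines, (L \ X).ncard = 1 := by
  by_contra hc
  push_neg at hc
  exact hcl (closed_of_no_line hE hIndep X hc)

lemma line_closed (hE : M.E = Set.univ)
    (hIndep : ∀ X, M.Indep X ↔ (X.ncard ≤ 3 ∧ ∀ L ∈ P7Lines, ¬ L ⊆ X))
    {L : Set (Fin 7)} (hL : L ∈ P7Lines) : M.closure L = L := by
  apply closed_of_no_line hE hIndep
  intro L' hL'
  obtain ⟨l, hl, rfl⟩ := mem_P7Lines_iff.mp hL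
  obtain ⟨l', hl', rfl⟩ := mem_P7Lines_iff.mp hL'
  rw [← Finset.coe_sdiff, Set.ncard_coe_finset]
  exact linediffF l hl l' hl'

lemma pair_spec {L : Set (Fin 7)} (hL : L ∈ P7Lines) : ∃ p q : Fin 7, p ∈ L ∧ q ∈ L ∧ p ≠ q ∧
    ∀ L' ∈ P7Lines, p ∈ L' → q ∈ L' → L' = L := by
  obtain ⟨l, hl, rfl⟩ := mem_P7Lines_iff.mp hL
  obtain ⟨p, q, hp, hq, hpq, huniq⟩ := pairfactF l hl
  refine ⟨p, q, by simpa using hp, by simpa using hq, hpq, ?_⟩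
  intro L' hL' hp' hq'
  obtain ⟨l', hl', rfl⟩ := mem_P7Lines_iff.mp hL'
  rw [huniq l' hl' (by simpa using hp') (by simpa using hq')]

lemma pair_indep (hE : M.E = Set.univ)
    (hIndep : ∀ X, M.Indep X ↔ (X.ncard ≤ 3 ∧ ∀ L ∈ P7Lines, ¬ L ⊆ X))
    {p q : Fin 7} (hpq : p ≠ q) : M.Indep {p, q} := by
  rw [hIndep]
  refine ⟨by rw [Set.ncard_pair hpq]; omega, fun L' hL' hsub => ?_⟩
  have h3 := lines_card hL'
  have := Set.ncard_le_ncard hsub (Set.toFinite _)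
  rw [h3, Set.ncard_pair hpq] at this
  omega

lemma pair_not_closed (hE : M.E = Set.univ)
    (hIndep : ∀ X, M.Indep X ↔ (X.ncard ≤ 3 ∧ ∀ L ∈ P7Lines, ¬ L ⊆ X))
    {L : Set (Fin 7)} (hL : L ∈ P7Lines) {p q : Fin 7} (hp : p ∈ L) (hq : q ∈ L)
    (hpq : p ≠ q) : M.closure {p, q} ≠ {p, q} := by
  have hns : ¬ L ⊆ ({p, q} : Set (Fin 7)) := by
    intro hsub
    have := Set.ncard_le_ncard hsub (Set.toFinite _)
    rw [lines_card hL, Set.ncard_pair hpq] at this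
    omega
  obtain ⟨r, hrL, hrpq⟩ := not_subset.mp hns
  have hLeq : L = insert r ({p, q} : Set (Fin 7)) := by
    refine (Set.eq_of_subset_of_ncard_le ?_ ?_ (Set.toFinite _)).symm
    · exact insert_subset hrL (insert_subset hp (singleton_subset_iff.mpr hq))
    · rw [lines_card hL, Set.ncard_insert_of_notMem hrpq (Set.toFinite _), Set.ncard_pair hpq]
  have hrcl : r ∈ M.closure {p, q} :=
    (pair_indep hE hIndep hpq).mem_closure_iff.mpr (Or.inl (hLeq ▸ (line_circuit hE hIndep hL).1))
  intro hceq
  rw [hceq] at hrcl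
  exact hrpq hrcl

lemma circuit_through_pair (hE : M.E = Set.univ)
    (hIndep : ∀ X, M.Indep X ↔ (X.ncard ≤ 3 ∧ ∀ L ∈ P7Lines, ¬ L ⊆ X))
    {L : Set (Fin 7)} (hL : L ∈ P7Lines) {p q : Fin 7} (hp : p ∈ L) (hq : q ∈ L)
    (hpq : p ≠ q) (huniq : ∀ L' ∈ P7Lines, p ∈ L' → q ∈ L' → L' = L)
    {C : Set (Fin 7)} (hC : Circuit M C) (h1 : (C \ ({p, q} : Set (Fin 7))).ncard = 1) :
    C = L := by
  obtain ⟨e, he⟩ := Set.ncard_eq_one.mp h1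
  have heC : e ∈ C ∧ e ∉ ({p, q} : Set (Fin 7)) := by
    have : e ∈ C \ {p, q} := by rw [he]; rfl
    exact this
  have hCsub : C ⊆ insert p (insert q ({e} : Set (Fin 7))) := by
    intro x hx
    by_cases hxpq : x ∈ ({p, q} : Set (Fin 7))
    · rcases hxpq with h' | h'
      · exact Or.inl h'
      · exact Or.inr (Or.inl h')
    · have : x ∈ C \ {p, q} := ⟨hx, hxpq⟩
      rw [he, Set.mem_singleton_iff] at this
      exact Or.inr (Or.inr this)
  have hScard : (insert p (insert q ({e} : Set (Fin 7)))).ncard ≤ 3 := by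
    refine le_trans (Set.ncard_insert_le _ _) ?_
    have h2 := Set.ncard_insert_le q ({e} : Set (Fin 7))
    rw [Set.ncard_singleton] at h2
    omega
  have hCnotind : ¬ M.Indep C := hC.1.not_indep
  rw [hIndep] at hCnotind
  push_neg at hCnotind
  obtain ⟨L', hL', hLC⟩ := hCnotind (le_trans (Set.ncard_le_ncard hCsub (Set.toFinite _)) hScard)
  have hCL' : C ⊆ L' := hC.2 (line_circuit hE hIndep hL').1 hLC
  have hCeq : C = L' := subset_antisymm hCL' hLC
  have h3 := lines_card hL'
  have hLeq : L' = insert p (insert q ({e} : Set (Fin 7))) :=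
    Set.eq_of_subset_of_ncard_le (hCeq ▸ hCsub) (by omega) (Set.toFinite _)
  have hpL' : p ∈ L' := by rw [hLeq]; exact Or.inl rfl
  have hqL' : q ∈ L' := by rw [hLeq]; exact Or.inr (Or.inl rfl)
  rw [hCeq]
  exact huniq L' hL' hpL' hqL'

end Matroid

theorem stmt19 (M : Matroid (Fin 7)) (hE : M.E = Set.univ)
    (hIndep : ∀ X, M.Indep X ↔ (X.ncard ≤ 3 ∧ ∀ L ∈ P7Lines, ¬ L ⊆ X)) :
    (∃! B, MinimalTropicalBasis M B) ∧
      ∀ X ⊆ M.E, M.closure X ≠ X →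
        ∃ L, Circuit M L ∧ M.closure L = L ∧ L.ncard = 3 ∧ (L \ X).ncard = 1 := by
  constructor
  · -- unique minimal tropical basis
    have hTB : TropicalBasis M P7Lines := by
      refine ⟨fun L hL => line_circuit hE hIndep hL, fun X _ hcl => ?_⟩
      exact exists_line hE hIndep X hcl
    -- every tropical basis contains every line
    have hmem : ∀ (B : Set (Set (Fin 7))), TropicalBasis M B → ∀ L ∈ P7Lines, L ∈ B := by
      intro B hB L hL
      obtain ⟨p, q, hp, hq, hpq, huniq⟩ := pair_spec hL
      have hXE : ({p, q} : Set (Fin 7)) ⊆ M.E := by rw [hE]; exact subset_univ _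
      obtain ⟨C, hCB, h1⟩ := hB.2 {p, q} hXE (pair_not_closed hE hIndep hL hp hq hpq)
      have := circuit_through_pair hE hIndep hL hp hq hpq huniq (hB.1 C hCB) h1
      rwa [← this]
    have hMin : MinimalTropicalBasis M P7Lines := by
      refine ⟨hTB, fun L hL hTB' => ?_⟩
      have := hmem _ hTB' L hL
      exact this.2 rfl
    refine ⟨P7Lines, hMin, fun B hB => ?_⟩
    have hsup : P7Lines ⊆ B := fun L hL => hmem B hB.1 L hL
    refine subset_antisymm ?_ hsup
    intro C hCB
    by_contra hCn
    refine hB.2 C hCB ⟨fun D hD => hB.1.1 D hD.1, fun X hX hcl => ?_⟩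
    obtain ⟨L, hL, h1⟩ := exists_line hE hIndep X hcl
    exact ⟨L, ⟨hsup hL, fun h => hCn (h ▸ hL)⟩, h1⟩
  · intro X _ hcl
    obtain ⟨L, hL, h1⟩ := exists_line hE hIndep X hcl
    exact ⟨L, line_circuit hE hIndep hL, line_closed hE hIndep hL, lines_card hL, h1⟩
end TropicalPaper
end
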